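/- arXiv:0809.1482 — 6 statements merged into one kernel-verified Lean document; each statement's English description precedes it below -/
import Mathlib

section
/- For every θ ∈ ℂ⁴, the involutions σ₁, σ₂, σ₃ restricted to S(θ) satisfy no relations other than the trivial ones σ₁² = σ₂² = σ₃² = 1; that is, the group homomorphism from the free product (ℤ/2ℤ) * (ℤ/2ℤ) * (ℤ/2ℤ) to the group of bijections of S(θ) that sends the i-th free-product generator to σᵢ|_{S(θ)} is injective. Equivalently, for every nonempty word σ_{i₁}σ_{i₂}⋯σ_{iₙ} with all consecutive indices i_ν ≠ i_{ν+1}, the corresponding composite is not the identity map of S(θ). -/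
noncomputable section

/-- The defining cubic polynomial `f(x,θ)` of the character variety. -/
def pvF (θ : ℂ × ℂ × ℂ × ℂ) (x : ℂ × ℂ × ℂ) : ℂ :=
  x.1 * x.2.1 * x.2.2 + x.1 ^ 2 + x.2.1 ^ 2 + x.2.2 ^ 2
    - θ.1 * x.1 - θ.2.1 * x.2.1 - θ.2.2.1 * x.2.2 + θ.2.2.2

/-- The affine cubic surface `S(θ)`. -/
def pvS (θ : ℂ × ℂ × ℂ × ℂ) : Set (ℂ × ℂ × ℂ) := {x | pvF θ x = 0}

/-- The three involutions `σ₁, σ₂, σ₃` (indexed by `Fin 3`). -/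
def sig (θ : ℂ × ℂ × ℂ × ℂ) : Fin 3 → (ℂ × ℂ × ℂ) → (ℂ × ℂ × ℂ) :=
  ![fun x => (θ.1 - x.2.1 * x.2.2 - x.1, x.2.1, x.2.2),
    fun x => (x.1, θ.2.1 - x.1 * x.2.2 - x.2.1, x.2.2),
    fun x => (x.1, x.2.1, θ.2.2.1 - x.1 * x.2.1 - x.2.2)]

/-- The composite map `σ_{i₁} ∘ σ_{i₂} ∘ ⋯ ∘ σ_{iₙ}` corresponding to the
word given by the list `l = [i₁, i₂, …, iₙ]`. -/
def applyWord (θ : ℂ × ℂ × ℂ × ℂ) (l : List (Fin 3)) (x : ℂ × ℂ × ℂ) : ℂ × ℂ × ℂ :=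
  l.foldr (fun i y => sig θ i y) x

/-!
Ping-pong on the sup norm of `ℂ³`. Call `x` dominated by its `m`-th coordinate when the other
two coordinates have norm at least `R` and less than `‖xₘ‖`. If `R ≥ ‖(θ₁,θ₂,θ₃)‖ + 3` and
`j ≠ m`, then `σⱼ` sends such an `x` to a point dominated by its `j`-th coordinate, of strictly
larger norm, because the new coordinate `θⱼ - xₘxₖ - xⱼ` is roughly `xₘxₖ`. Hence a reduced word
whose last letter differs from `m` strictly increases the norm of such points. Finally `S(θ)`
contains a point dominated by any prescribed coordinate: fix the other two coordinates at `R`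
and take the larger root of the resulting monic quadratic in the remaining one.
-/

section QuadraticRoot

variable {K : Type*} [NormedField K] [IsAlgClosed K] [NeZero (2 : K)]

theorem exists_root_two_mul_norm_ge (b c : K) :
    ∃ a : K, a * a + b * a + c = 0 ∧ ‖b‖ ≤ 2 * ‖a‖ := by
  obtain ⟨a, ha⟩ := exists_quadratic_eq_zero (one_ne_zero' K) (IsAlgClosed.exists_eq_mul_self _)
  rw [one_mul] at ha
  by_cases hb : ‖b‖ ≤ 2 * ‖a‖
  · exact ⟨a, ha, hb⟩
  -- Vieta: the other root
  refine ⟨-b - a, by linear_combination ha, ?_⟩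
  have : ‖b‖ ≤ ‖-b - a‖ + ‖a‖ := by
    simpa [norm_neg] using norm_add_le (-b - a) a
  linarith

end QuadraticRoot

def coord : Fin 3 → ℂ × ℂ × ℂ → ℂ := ![Prod.fst, fun x => x.2.1, fun x => x.2.2]

theorem norm_coord_le (n : Fin 3) (x : ℂ × ℂ × ℂ) : ‖coord n x‖ ≤ ‖x‖ := by
  fin_cases n
  · exact norm_fst_le x
  · exact (norm_fst_le x.2).trans (norm_snd_le x)
  · exact (norm_snd_le x.2).trans (norm_snd_le x)

theorem norm_eq_norm_coord_of_forall_le {m : Fin 3} {x : ℂ × ℂ × ℂ}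
    (h : ∀ n, ‖coord n x‖ ≤ ‖coord m x‖) : ‖x‖ = ‖coord m x‖ := by
  refine le_antisymm ?_ (norm_coord_le m x)
  rw [Prod.norm_def, Prod.norm_def]
  exact max_le (h 0) (max_le (h 1) (h 2))

theorem Fin.exists_ne_and_ne (j m : Fin 3) : ∃ k, k ≠ j ∧ k ≠ m := by
  revert j m; decide

theorem Fin.eq_or_eq_of_ne {j m k n : Fin 3} (hjm : j ≠ m) (hkj : k ≠ j) (hkm : k ≠ m)
    (hnj : n ≠ j) : n = m ∨ n = k := by
  revert j m k n; decide

def linearCoeffs (θ : ℂ × ℂ × ℂ × ℂ) : ℂ × ℂ × ℂ := (θ.1, θ.2.1, θ.2.2.1)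

theorem coord_sig_of_ne (θ : ℂ × ℂ × ℂ × ℂ) {j n : Fin 3} (h : n ≠ j) (x : ℂ × ℂ × ℂ) :
    coord n (sig θ j x) = coord n x := by
  fin_cases j <;> fin_cases n <;> simp_all [coord, sig]

theorem coord_sig_self (θ : ℂ × ℂ × ℂ × ℂ) {j m k : Fin 3} (hjm : j ≠ m) (hkj : k ≠ j)
    (hkm : k ≠ m) (x : ℂ × ℂ × ℂ) :
    coord j (sig θ j x) = coord j (linearCoeffs θ) - coord m x * coord k x - coord j x := by
  fin_cases j <;> fin_cases m <;> fin_cases k <;> simp_all [coord, sig, linearCoeffs] <;> ring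

theorem pvF_eq_of_coord_eq (θ : ℂ × ℂ × ℂ × ℂ) {m : Fin 3} {s : ℂ} {x : ℂ × ℂ × ℂ}
    (hs : ∀ n ≠ m, coord n x = s) :
    pvF θ x = coord m x * coord m x + (s * s - coord m (linearCoeffs θ)) * coord m x
      + (2 * s * s - (θ.1 + θ.2.1 + θ.2.2.1 - coord m (linearCoeffs θ)) * s + θ.2.2.2) := by
  obtain ⟨x₁, x₂, x₃⟩ := x
  simp only [Fin.forall_fin_succ] at hs
  fin_cases m <;> simp_all [coord, pvF, linearCoeffs] <;> ring

theorem exists_coord_eq (m : Fin 3) (a s : ℂ) :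
    ∃ x : ℂ × ℂ × ℂ, coord m x = a ∧ ∀ n ≠ m, coord n x = s := by
  fin_cases m
  · exact ⟨(a, s, s), rfl, fun n hn => by fin_cases n <;> simp_all [coord]⟩
  · exact ⟨(s, a, s), rfl, fun n hn => by fin_cases n <;> simp_all [coord]⟩
  · exact ⟨(s, s, a), rfl, fun n hn => by fin_cases n <;> simp_all [coord]⟩

theorem norm_lt_norm_sub_mul_sub {K : Type*} [NormedField K] {t u v w : K} {R : ℝ}
    (hR : ‖t‖ + 3 ≤ R) (hv : R ≤ ‖v‖) (hvu : ‖v‖ < ‖u‖) (hwu : ‖w‖ < ‖u‖) : ‖u‖ < ‖t - u * v - w‖ := by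
  have hlower : ‖u‖ * ‖v‖ - ‖t‖ - ‖w‖ ≤ ‖t - u * v - w‖ := by
    have := norm_sub_norm_le (u * v) (t - w)
    have := norm_sub_le t w
    rw [norm_mul] at *
    rw [show t - u * v - w = -(u * v - (t - w)) by ring, norm_neg]
    linarith
  nlinarith [norm_nonneg t, norm_nonneg w]

def Dominated (R : ℝ) (m : Fin 3) (x : ℂ × ℂ × ℂ) : Prop :=
  ∀ n ≠ m, R ≤ ‖coord n x‖ ∧ ‖coord n x‖ < ‖coord m x‖

theorem Dominated.norm_eq {R : ℝ} {m : Fin 3} {x : ℂ × ℂ × ℂ} (hx : Dominated R m x) :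
    ‖x‖ = ‖coord m x‖ :=
  norm_eq_norm_coord_of_forall_le fun n => by
    rcases eq_or_ne n m with rfl | hn
    · exact le_rfl
    · exact (hx n hn).2.le

section PingPong

variable {θ : ℂ × ℂ × ℂ × ℂ} {R : ℝ}

theorem Dominated.map_sig (hR : ‖linearCoeffs θ‖ + 3 ≤ R) {j m : Fin 3} (hjm : j ≠ m)
    {x : ℂ × ℂ × ℂ} (hx : Dominated R m x) :
    Dominated R j (sig θ j x) ∧ ‖x‖ < ‖sig θ j x‖ := by
  obtain ⟨k, hkj, hkm⟩ := Fin.exists_ne_and_ne j m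
  obtain ⟨hRk, hkm_lt⟩ := hx k hkm
  have hgrow : ‖coord m x‖ < ‖coord j (sig θ j x)‖ := by
    rw [coord_sig_self θ hjm hkj hkm]
    exact norm_lt_norm_sub_mul_sub (by linarith [norm_coord_le j (linearCoeffs θ)]) hRk hkm_lt
      (hx j hjm).2
  have hdom : Dominated R j (sig θ j x) := fun n hn => by
    rw [coord_sig_of_ne θ hn]
    rcases Fin.eq_or_eq_of_ne hjm hkj hkm hn with rfl | rfl
    · exact ⟨hRk.trans hkm_lt.le, hgrow⟩
    · exact ⟨hRk, hkm_lt.trans hgrow⟩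
  exact ⟨hdom, hx.norm_eq ▸ hdom.norm_eq ▸ hgrow⟩

theorem Dominated.map_applyWord (hR : ‖linearCoeffs θ‖ + 3 ≤ R) {m i : Fin 3}
    (t : List (Fin 3)) (hred : (i :: t).IsChain (· ≠ ·))
    (hlast : (i :: t).getLast (List.cons_ne_nil i t) ≠ m) {x : ℂ × ℂ × ℂ}
    (hx : Dominated R m x) :
    Dominated R i (applyWord θ (i :: t) x) ∧ ‖x‖ < ‖applyWord θ (i :: t) x‖ := by
  induction t generalizing i with
  | nil => exact hx.map_sig hR hlast
  | cons j t ih =>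
    obtain ⟨hij, hred'⟩ := List.isChain_cons_cons.mp hred
    obtain ⟨hdom, hlt⟩ := ih hred' (by rwa [List.getLast_cons (List.cons_ne_nil j t)] at hlast)
    obtain ⟨hdom', hlt'⟩ := hdom.map_sig hR hij
    exact ⟨hdom', hlt.trans hlt'⟩

theorem exists_mem_pvS_dominated (hR : ‖linearCoeffs θ‖ + 3 ≤ R) (m : Fin 3) :
    ∃ x ∈ pvS θ, Dominated R m x := by
  have hC : 0 ≤ ‖linearCoeffs θ‖ := norm_nonneg _
  obtain ⟨a, ha, hba⟩ := exists_root_two_mul_norm_ge ((R : ℂ) * R - coord m (linearCoeffs θ))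
    (2 * R * R - (θ.1 + θ.2.1 + θ.2.2.1 - coord m (linearCoeffs θ)) * R + θ.2.2.2)
  obtain ⟨x, rfl, hxR⟩ := exists_coord_eq m a R
  have hnormR : ‖(R : ℂ)‖ = R := by
    rw [Complex.norm_real, Real.norm_of_nonneg (by linarith)]
  have hRa : R < ‖coord m x‖ := by
    have := norm_sub_norm_le ((R : ℂ) * R) (coord m (linearCoeffs θ))
    have := norm_coord_le m (linearCoeffs θ)
    rw [norm_mul, hnormR] at *
    nlinarith
  refine ⟨x, ?_, fun n hn => ?_⟩
  · simp only [pvS, Set.mem_ofPred_eq, pvF_eq_of_coord_eq θ hxR, ha]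
  · rw [hxR n hn, hnormR]
    exact ⟨le_rfl, hRa⟩

end PingPong

/-- The involutions `σ₁, σ₂, σ₃` restricted to `S(θ)` satisfy no relations other than
the trivial ones `σᵢ² = 1`: every nonempty reduced word (consecutive letters distinct)
in `σ₁, σ₂, σ₃` is not the identity map of `S(θ)`. -/
theorem no_nontrivial_relations (θ : ℂ × ℂ × ℂ × ℂ) (l : List (Fin 3))
    (hne : l ≠ []) (hred : l.Chain' (· ≠ ·)) :
    ¬ (∀ x ∈ pvS θ, applyWord θ l x = x) := by
  intro hrel
  obtain ⟨i, t, rfl⟩ := List.exists_cons_of_ne_nil hne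
  obtain ⟨m, hm⟩ := exists_ne ((i :: t).getLast hne)
  have hR : ‖linearCoeffs θ‖ + 3 ≤ ‖linearCoeffs θ‖ + 3 := le_rfl
  obtain ⟨x, hxS, hx⟩ := exists_mem_pvS_dominated hR m
  have hgrow := (hx.map_applyWord hR t hred hm.symm).2
  rw [hrel x hxS] at hgrow
  exact lt_irrefl _ hgrow
end
end

section
/- Let θ ∈ ℂ⁴ and x ∈ S(θ). The following are equivalent: (i) x is a singular point of S(θ), i.e. ∂f/∂x₁(x,θ) = ∂f/∂x₂(x,θ) = ∂f/∂x₃(x,θ) = 0; (ii) σᵢ(x) = x for all i = 1,2,3; (iii) x is a fixed point of the action of G(2), i.e. g(x) = x for every g in the subgroup G(2) generated by the products σᵢσⱼ (i,j ∈ {1,2,3}). -/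
noncomputable section

lemma sig_involutive (θ : ℂ × ℂ × ℂ × ℂ) (i : Fin 3) : Function.Involutive (sig θ i) := by
  intro x
  obtain ⟨a, b, c⟩ := x
  fin_cases i <;> simp [sig]

/-- `σᵢ` as a bijection (permutation) of `ℂ³`. -/
def sigPerm (θ : ℂ × ℂ × ℂ × ℂ) (i : Fin 3) : Equiv.Perm (ℂ × ℂ × ℂ) :=
  (sig_involutive θ i).toPerm

/-- The subgroup `G(2)` of even words: the subgroup of bijections of `ℂ³`
generated by the products `σᵢ σⱼ`. -/
def G2 (θ : ℂ × ℂ × ℂ × ℂ) : Subgroup (Equiv.Perm (ℂ × ℂ × ℂ)) :=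
  Subgroup.closure {g | ∃ i j : Fin 3, g = sigPerm θ i * sigPerm θ j}

/-!
The involution `σᵢ` changes only the `i`-th coordinate, and moves it by `-∂f/∂xᵢ`; hence
`σᵢ x = x` exactly when `∂f/∂xᵢ` vanishes at `x`. A point fixed by all `σᵢ` is fixed by the group
they generate. Conversely, if `σᵢ σⱼ x = x` then `σⱼ x = σᵢ x`, and for `i ≠ j` two maps moving
different coordinates can only agree at `x` if both fix it.
-/

def pvGrad (θ : ℂ × ℂ × ℂ × ℂ) (x : ℂ × ℂ × ℂ) : Fin 3 → ℂ :=
  ![x.2.1 * x.2.2 + 2 * x.1 - θ.1,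
    x.1 * x.2.2 + 2 * x.2.1 - θ.2.1,
    x.1 * x.2.1 + 2 * x.2.2 - θ.2.2.1]

lemma sig_apply_eq_self_iff (θ : ℂ × ℂ × ℂ × ℂ) (x : ℂ × ℂ × ℂ) (i : Fin 3) :
    sig θ i x = x ↔ pvGrad θ x i = 0 := by
  obtain ⟨a, b, c⟩ := x
  fin_cases i <;> simp [sig, pvGrad, Prod.ext_iff] <;>
    exact ⟨fun h => by linear_combination -h, fun h => by linear_combination -h⟩

lemma sig_apply_eq_self_of_apply_eq (θ : ℂ × ℂ × ℂ × ℂ) (x : ℂ × ℂ × ℂ) {i j : Fin 3}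
    (hij : i ≠ j) (h : sig θ i x = sig θ j x) : sig θ i x = x := by
  obtain ⟨a, b, c⟩ := x
  fin_cases i <;> fin_cases j <;> simp [sig, Prod.ext_iff] at hij h ⊢ <;> tauto

lemma G2_le_stabilizer (θ : ℂ × ℂ × ℂ × ℂ) (x : ℂ × ℂ × ℂ) (h : ∀ i, sig θ i x = x) :
    G2 θ ≤ MulAction.stabilizer (Equiv.Perm (ℂ × ℂ × ℂ)) x := by
  refine (Subgroup.closure_le _).2 ?_
  rintro _ ⟨i, j, rfl⟩
  change sig θ i (sig θ j x) = x
  rw [h j, h i]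

lemma sig_apply_eq_self_of_G2_fixed (θ : ℂ × ℂ × ℂ × ℂ) (x : ℂ × ℂ × ℂ)
    (h : ∀ g ∈ G2 θ, g x = x) (i : Fin 3) : sig θ i x = x := by
  have hij : i ≠ i + 1 := by fin_cases i <;> decide
  have hfix : sig θ i (sig θ (i + 1) x) = x := h _ (Subgroup.subset_closure ⟨i, i + 1, rfl⟩)
  rw [(sig_involutive θ i).eq_iff] at hfix
  exact sig_apply_eq_self_of_apply_eq θ x hij hfix.symm

theorem singular_iff_fixed_general (θ : ℂ × ℂ × ℂ × ℂ) (x : ℂ × ℂ × ℂ) :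
    List.TFAE
      [ (x.2.1 * x.2.2 + 2 * x.1 - θ.1 = 0 ∧
          x.1 * x.2.2 + 2 * x.2.1 - θ.2.1 = 0 ∧
          x.1 * x.2.1 + 2 * x.2.2 - θ.2.2.1 = 0),
        (∀ i : Fin 3, sig θ i x = x),
        (∀ g ∈ G2 θ, g x = x) ] := by
  tfae_have 1 ↔ 2 := by
    simp only [sig_apply_eq_self_iff, Fin.forall_fin_succ, IsEmpty.forall_iff, and_true]
    rfl
  tfae_have 2 → 3 := fun h g hg => G2_le_stabilizer θ x h hg
  tfae_have 3 → 2 := sig_apply_eq_self_of_G2_fixed θ x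
  tfae_finish

/-- For `x ∈ S(θ)` the following are equivalent: (i) `x` is a singular point of `S(θ)`;
(ii) `x` is fixed by all three involutions `σᵢ`; (iii) `x` is fixed by every element
of `G(2)`. -/
theorem singular_iff_fixed (θ : ℂ × ℂ × ℂ × ℂ) (x : ℂ × ℂ × ℂ) (hx : x ∈ pvS θ) :
    List.TFAE
      [ (x.2.1 * x.2.2 + 2 * x.1 - θ.1 = 0 ∧
          x.1 * x.2.2 + 2 * x.2.1 - θ.2.1 = 0 ∧
          x.1 * x.2.1 + 2 * x.2.2 - θ.2.2.1 = 0),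
        (∀ i : Fin 3, sig θ i x = x),
        (∀ g ∈ G2 θ, g x = x) ] :=
  singular_iff_fixed_general θ x
end
end

section
/- For every choice of (a,b,c) ∈ {0,1}⁴ × {0,1}⁴ × {0,1}⁴, the real symmetric matrix M(a,b,c) has no eigenvalues ≥ 7: every λ ∈ ℂ for which there exists a nonzero vector v ∈ ℂ⁴ with M(a,b,c)·v = λ·v is real and satisfies λ < 7. -/
/-! Every eigenvalue of `M(a,b,c)` is real because the matrix is symmetric, and by Gershgorin's
theorem it lies within `∑_{j ≠ k} |M k j|` of some diagonal entry `M k k`. In each row, diagonal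
entry and off-diagonal moduli split into three pairs `x + y + |x - y| = 2 max x y ≤ 2`, so every
eigenvalue is at most `6`. -/

noncomputable section

/-- The symmetric 4×4 matrix `M(a,b,c)` associated with ON/OFF data
`a, b, c ∈ {0,1}⁴` (indexed so that `a 0 = a₁`, …, `a 3 = a₄`, etc.). -/
def Mabc (a b c : Fin 4 → ℝ) : Matrix (Fin 4) (Fin 4) ℝ :=
  !![a 2 + a 3 + b 0 + b 1 + c 0 + c 1, a 2 - a 3, c 0 - c 1, b 0 - b 1;
     a 2 - a 3, a 2 + a 3 + b 2 + b 3 + c 2 + c 3, b 2 - b 3, c 2 - c 3;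
     c 0 - c 1, b 2 - b 3, a 0 + a 1 + b 2 + b 3 + c 0 + c 1, a 0 - a 1;
     b 0 - b 1, c 2 - c 3, a 0 - a 1, a 0 + a 1 + b 0 + b 1 + c 2 + c 3]

open Matrix Module.End

namespace Matrix

variable {𝕜 n : Type*} [RCLike 𝕜] [Fintype n] [DecidableEq n] {A : Matrix n n 𝕜} {μ : 𝕜}
  {v : n → 𝕜}

theorem hasEigenvalue_toLin'_of_mulVec_eq_smul (hv : v ≠ 0) (h : A *ᵥ v = μ • v) :
    HasEigenvalue (toLin' A) μ :=
  hasEigenvalue_of_hasEigenvector ⟨mem_eigenspace_iff.mpr (by rwa [toLin'_apply]), hv⟩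

theorem IsHermitian.im_eq_zero_of_mulVec_eq_smul (hA : A.IsHermitian) (hv : v ≠ 0)
    (h : A *ᵥ v = μ • v) : RCLike.im μ = 0 := by
  have hμ : HasEigenvalue (toEuclideanLin A) μ := by
    refine hasEigenvalue_of_hasEigenvector (x := WithLp.toLp 2 v) ⟨mem_eigenspace_iff.mpr ?_, ?_⟩
    · simp [h]
    · simpa using hv
  exact RCLike.conj_eq_iff_im.mp <|
    (isSymmetric_toEuclideanLin_iff.mpr hA).conj_eigenvalue_eq_self hμ

theorem re_le_of_mulVec_eq_smul {r : ℝ}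
    (hr : ∀ k, RCLike.re (A k k) + ∑ j ∈ Finset.univ.erase k, ‖A k j‖ ≤ r)
    (hv : v ≠ 0) (h : A *ᵥ v = μ • v) : RCLike.re μ ≤ r := by
  obtain ⟨k, hk⟩ := eigenvalue_mem_ball (hasEigenvalue_toLin'_of_mulVec_eq_smul hv h)
  rw [Metric.mem_closedBall, dist_eq_norm] at hk
  calc RCLike.re μ = RCLike.re (A k k) + RCLike.re (μ - A k k) := by simp
    _ ≤ RCLike.re (A k k) + ∑ j ∈ Finset.univ.erase k, ‖A k j‖ := by
      gcongr; exact (RCLike.re_le_norm _).trans hk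
    _ ≤ r := hr k

end Matrix

theorem add_add_abs_sub_le_two {x y : ℝ} (hx : x ≤ 1) (hy : y ≤ 1) : x + y + |x - y| ≤ 2 := by
  have : |x - y| ≤ 2 - x - y := abs_sub_le_iff.mpr ⟨by linarith, by linarith⟩
  linarith

theorem Mabc_isSymm (a b c : Fin 4 → ℝ) : (Mabc a b c).IsSymm := by
  ext i j
  fin_cases i <;> fin_cases j <;> simp [Mabc]

theorem Mabc_diag_add_sum_abs_le_six {a b c : Fin 4 → ℝ} (ha : ∀ i, a i ≤ 1) (hb : ∀ i, b i ≤ 1)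
    (hc : ∀ i, c i ≤ 1) (k : Fin 4) :
    Mabc a b c k k + ∑ j ∈ Finset.univ.erase k, |Mabc a b c k j| ≤ 6 := by
  fin_cases k <;> simp [Mabc, Fin.sum_univ_four] <;>
    linarith [add_add_abs_sub_le_two (ha 0) (ha 1), add_add_abs_sub_le_two (ha 2) (ha 3),
      add_add_abs_sub_le_two (hb 0) (hb 1), add_add_abs_sub_le_two (hb 2) (hb 3),
      add_add_abs_sub_le_two (hc 0) (hc 1), add_add_abs_sub_le_two (hc 2) (hc 3)]

/-- For every ON/OFF data `(a,b,c) ∈ {0,1}¹²`, the matrix `M(a,b,c)` has no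
eigenvalues `≥ 7`: any eigenvalue `λ ∈ ℂ` (i.e. admitting a nonzero eigenvector)
is real and `< 7`. -/
theorem Mabc_no_eigenvalue_ge_seven (a b c : Fin 4 → ℝ)
    (ha : ∀ i, a i = 0 ∨ a i = 1) (hb : ∀ i, b i = 0 ∨ b i = 1)
    (hc : ∀ i, c i = 0 ∨ c i = 1)
    (lam : ℂ) (v : Fin 4 → ℂ) (hv : v ≠ 0)
    (heig : ((Mabc a b c).map (fun r => (r : ℂ))).mulVec v = lam • v) :
    lam.im = 0 ∧ lam.re < 7 := by
  have le_one {x : Fin 4 → ℝ} (hx : ∀ i, x i = 0 ∨ x i = 1) (i : Fin 4) : x i ≤ 1 := by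
    rcases hx i with h | h <;> simp [h]
  have hherm : ((Mabc a b c).map (fun r => (r : ℂ))).IsHermitian :=
    (isHermitian_iff_isSymm.mpr (Mabc_isSymm a b c)).map _ fun r => (Complex.conj_ofReal r).symm
  refine ⟨hherm.im_eq_zero_of_mulVec_eq_smul hv heig, ?_⟩
  have hrow := Mabc_diag_add_sum_abs_le_six (le_one ha) (le_one hb) (le_one hc)
  have : lam.re ≤ 6 := re_le_of_mulVec_eq_smul (fun k => by simpa using hrow k) hv heig
  linarith
end
end

section
/- Let P₁ = (1,1,0), P₂ = (1,0,1), P₃ = (0,1,1), P₄ = (0,0,0) in ℝ³ (the vertices of a regular tetrahedron with edge length √2). Let κ = (κ₀,κ₁,κ₂,κ₃,κ₄) ∈ ℝ⁵ satisfy 2κ₀ + κ₁ + κ₂ + κ₃ + κ₄ = 1, and define r₁² = (κ₁−1)² + κ₂² + κ₃² + κ₄², r₂² = κ₁² + (κ₂−1)² + κ₃² + κ₄², r₃² = κ₁² + κ₂² + (κ₃−1)² + κ₄², r₄² = κ₁² + κ₂² + κ₃² + (κ₄−1)². Suppose R ∈ ℝ³ and h ∈ ℝ satisfy ‖R − Pᵢ‖²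 + h² = rᵢ² for i = 1,2,3,4 (i.e. the point Q = (R,h) ∈ ℝ⁴ is at distance rᵢ from (Pᵢ,0) for each i, and R is the orthogonal projection of Q to ℝ³ × {0}). Then h² = κ₀², and R = α₁P₁ + α₂P₂ + α₃P₃ + α₄P₄ where αᵢ = κᵢ + κ₀/2 for i = 1,2,3,4 (note α₁ + α₂ + α₃ + α₄ = 1, so the αᵢ are the barycentric coordinates of R with respect to P₁,P₂,P₃,P₄). -/
/-!
Subtracting the equation for the vertex `P₄ = 0` from the other three kills `‖R‖²` and `h²` and
leaves three linear equations `⟨R, Pᵢ⟩ = …`; `P₁, P₂, P₃` form a basis, so this pins down `R`.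
With the radii `rᵢ² = ‖κ‖² + 1 - 2κᵢ` and the constraint on `κ` the solution is
`R = (κ₀ + κ₁ + κ₂, κ₀ + κ₁ + κ₃, κ₀ + κ₂ + κ₃)`, and then the equation for `P₄` gives `h² = κ₀²`.
-/

noncomputable section

/-- Squared Euclidean norm on `ℝ³` (written as `ℝ × ℝ × ℝ`). -/
def normSq3 (v : ℝ × ℝ × ℝ) : ℝ := v.1 ^ 2 + v.2.1 ^ 2 + v.2.2 ^ 2

lemma tetrahedron_combination (a₁ a₂ a₃ a₄ : ℝ) :
    a₁ • ((1 : ℝ), (1 : ℝ), (0 : ℝ)) + a₂ • ((1 : ℝ), (0 : ℝ), (1 : ℝ))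
        + a₃ • ((0 : ℝ), (1 : ℝ), (1 : ℝ)) + a₄ • ((0 : ℝ), (0 : ℝ), (0 : ℝ))
      = (a₁ + a₂, a₁ + a₃, a₂ + a₃) := by
  simp only [Prod.smul_mk, Prod.mk_add_mk, smul_eq_mul, mul_one, mul_zero, add_zero, zero_add]

lemma eq_of_normSq3_sub_tetrahedron_add (R : ℝ × ℝ × ℝ) (h c₁ c₂ c₃ c₄ : ℝ)
    (h₁ : normSq3 (R - ((1 : ℝ), (1 : ℝ), (0 : ℝ))) + h ^ 2 = c₁)
    (h₂ : normSq3 (R - ((1 : ℝ), (0 : ℝ), (1 : ℝ))) + h ^ 2 = c₂)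
    (h₃ : normSq3 (R - ((0 : ℝ), (1 : ℝ), (1 : ℝ))) + h ^ 2 = c₃)
    (h₄ : normSq3 (R - ((0 : ℝ), (0 : ℝ), (0 : ℝ))) + h ^ 2 = c₄) :
    R = ((c₄ + c₃ - c₁ - c₂ + 2) / 4, (c₄ + c₂ - c₁ - c₃ + 2) / 4,
      (c₄ + c₁ - c₂ - c₃ + 2) / 4) := by
  obtain ⟨x, y, z⟩ := R
  simp only [normSq3, Prod.mk_sub_mk, sub_zero] at h₁ h₂ h₃ h₄
  ext
  · linear_combination (h₄ + h₃ - h₁ - h₂) / 4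
  · linear_combination (h₄ + h₂ - h₁ - h₃) / 4
  · linear_combination (h₄ + h₁ - h₂ - h₃) / 4

/-- Lemma on the cone over the regular tetrahedron with vertices
`P₁ = (1,1,0)`, `P₂ = (1,0,1)`, `P₃ = (0,1,1)`, `P₄ = (0,0,0)` (edge length `√2`):
if `Q = (R,h) ∈ ℝ⁴` is at distance `rᵢ` from `(Pᵢ,0)` with the radii `rᵢ` defined by
the Painlevé parameters `κ ∈ K_ℝ`, then `h² = κ₀²` and the barycentric coordinates of
the orthogonal projection `R` are `αᵢ = κᵢ + κ₀/2`. -/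
theorem tetrahedron_cone_lemma (κ0 κ1 κ2 κ3 κ4 : ℝ)
    (hκ : 2 * κ0 + κ1 + κ2 + κ3 + κ4 = 1)
    (R : ℝ × ℝ × ℝ) (h : ℝ)
    (h1 : normSq3 (R - ((1 : ℝ), (1 : ℝ), (0 : ℝ))) + h ^ 2
            = (κ1 - 1) ^ 2 + κ2 ^ 2 + κ3 ^ 2 + κ4 ^ 2)
    (h2 : normSq3 (R - ((1 : ℝ), (0 : ℝ), (1 : ℝ))) + h ^ 2
            = κ1 ^ 2 + (κ2 - 1) ^ 2 + κ3 ^ 2 + κ4 ^ 2)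
    (h3 : normSq3 (R - ((0 : ℝ), (1 : ℝ), (1 : ℝ))) + h ^ 2
            = κ1 ^ 2 + κ2 ^ 2 + (κ3 - 1) ^ 2 + κ4 ^ 2)
    (h4 : normSq3 (R - ((0 : ℝ), (0 : ℝ), (0 : ℝ))) + h ^ 2
            = κ1 ^ 2 + κ2 ^ 2 + κ3 ^ 2 + (κ4 - 1) ^ 2) :
    h ^ 2 = κ0 ^ 2 ∧
    R = (κ1 + κ0 / 2) • ((1 : ℝ), (1 : ℝ), (0 : ℝ))
        + (κ2 + κ0 / 2) • ((1 : ℝ), (0 : ℝ), (1 : ℝ))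
        + (κ3 + κ0 / 2) • ((0 : ℝ), (1 : ℝ), (1 : ℝ))
        + (κ4 + κ0 / 2) • ((0 : ℝ), (0 : ℝ), (0 : ℝ)) := by
  have hR : R = (κ0 + κ1 + κ2, κ0 + κ1 + κ3, κ0 + κ2 + κ3) := by
    rw [eq_of_normSq3_sub_tetrahedron_add R h _ _ _ _ h1 h2 h3 h4]
    ext <;> dsimp only <;> linear_combination -hκ / 2
  refine ⟨?_, ?_⟩
  · simp only [hR, normSq3, Prod.mk_sub_mk, sub_zero] at h4
    linear_combination h4 + (κ4 - 1 - 2 * κ0 - κ1 - κ2 - κ3) * hκ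
  · rw [tetrahedron_combination, hR]
    ext <;> dsimp only <;> ring
end
end

section
/- Let θ = (2√2, 2√2, 3, 4) and let O = {(√2,√2,0), (√2,√2,1), (0,√2,1), (0,√2,2), (√2,0,1), (√2,0,2)} ⊆ ℂ³. Then: (i) O ⊆ S(θ); (ii) each of σ₁, σ₂, σ₃ maps O bijectively onto O; (iii) O has exactly 6 elements; (iv) O is the orbit of the point (√2,√2,1) under the group G generated by σ₁,σ₂,σ₃, and it is also the orbit of (√2,√2,1) under the even-word subgroup G(2); in particular O is a finite G-orbit and a finite G(2)-orbit of degree 6. -/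
noncomputable section

/-- The group `G` of bijections of `ℂ³` generated by `σ₁, σ₂, σ₃`. -/
def Gfull (θ : ℂ × ℂ × ℂ × ℂ) : Subgroup (Equiv.Perm (ℂ × ℂ × ℂ)) :=
  Subgroup.closure {g | ∃ i : Fin 3, g = sigPerm θ i}

namespace A1A1aux

def r2 : ℂ := (Real.sqrt 2 : ℝ)

lemma hr2 : r2 * r2 = 2 := by
  have h : Real.sqrt 2 * Real.sqrt 2 = 2 := Real.mul_self_sqrt (by norm_num)
  rw [r2]
  exact_mod_cast congrArg (Complex.ofReal) h

lemma hr0 : r2 ≠ 0 := by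
  rw [r2]
  exact_mod_cast Complex.ofReal_ne_zero.mpr (by positivity)

def θ₀ : ℂ × ℂ × ℂ × ℂ := (2 * r2, 2 * r2, (3 : ℂ), (4 : ℂ))

def O₀ : Set (ℂ × ℂ × ℂ) :=
  {(r2, r2, (0 : ℂ)), (r2, r2, (1 : ℂ)), ((0 : ℂ), r2, (1 : ℂ)),
   ((0 : ℂ), r2, (2 : ℂ)), (r2, (0 : ℂ), (1 : ℂ)), (r2, (0 : ℂ), (2 : ℂ))}

-- evaluation lemmas
lemma s1A : sig θ₀ 0 (r2, r2, (0:ℂ)) = (r2, r2, (0:ℂ)) := by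
  simp [sig, θ₀, Prod.ext_iff]; ring
lemma s1B : sig θ₀ 0 (r2, r2, (1:ℂ)) = ((0:ℂ), r2, (1:ℂ)) := by
  simp [sig, θ₀, Prod.ext_iff]; ring
lemma s1D : sig θ₀ 0 ((0:ℂ), r2, (2:ℂ)) = ((0:ℂ), r2, (2:ℂ)) := by
  simp [sig, θ₀, Prod.ext_iff]; ring
lemma s1E : sig θ₀ 0 (r2, (0:ℂ), (1:ℂ)) = (r2, (0:ℂ), (1:ℂ)) := by
  simp [sig, θ₀, Prod.ext_iff]; ring
lemma s1F : sig θ₀ 0 (r2, (0:ℂ), (2:ℂ)) = (r2, (0:ℂ), (2:ℂ)) := by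
  simp [sig, θ₀, Prod.ext_iff]; ring
lemma s1C : sig θ₀ 0 ((0:ℂ), r2, (1:ℂ)) = (r2, r2, (1:ℂ)) := by
  conv_rhs => rw [← sig_involutive θ₀ 0 (r2, r2, (1:ℂ)), s1B]

lemma s2A : sig θ₀ 1 (r2, r2, (0:ℂ)) = (r2, r2, (0:ℂ)) := by
  simp [sig, θ₀, Prod.ext_iff]; ring
lemma s2B : sig θ₀ 1 (r2, r2, (1:ℂ)) = (r2, (0:ℂ), (1:ℂ)) := by
  simp [sig, θ₀, Prod.ext_iff]; ring
lemma s2C : sig θ₀ 1 ((0:ℂ), r2, (1:ℂ)) = ((0:ℂ), r2, (1:ℂ)) := by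
  simp [sig, θ₀, Prod.ext_iff]; ring
lemma s2D : sig θ₀ 1 ((0:ℂ), r2, (2:ℂ)) = ((0:ℂ), r2, (2:ℂ)) := by
  simp [sig, θ₀, Prod.ext_iff]; ring
lemma s2F : sig θ₀ 1 (r2, (0:ℂ), (2:ℂ)) = (r2, (0:ℂ), (2:ℂ)) := by
  simp [sig, θ₀, Prod.ext_iff]; ring
lemma s2E : sig θ₀ 1 (r2, (0:ℂ), (1:ℂ)) = (r2, r2, (1:ℂ)) := by
  conv_rhs => rw [← sig_involutive θ₀ 1 (r2, r2, (1:ℂ)), s2B]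

lemma s3A : sig θ₀ 2 (r2, r2, (0:ℂ)) = (r2, r2, (1:ℂ)) := by
  simp [sig, θ₀, Prod.ext_iff]
  linear_combination -hr2
lemma s3C : sig θ₀ 2 ((0:ℂ), r2, (1:ℂ)) = ((0:ℂ), r2, (2:ℂ)) := by
  simp [sig, θ₀, Prod.ext_iff]; ring
lemma s3E : sig θ₀ 2 (r2, (0:ℂ), (1:ℂ)) = (r2, (0:ℂ), (2:ℂ)) := by
  simp [sig, θ₀, Prod.ext_iff]; ring
lemma s3B : sig θ₀ 2 (r2, r2, (1:ℂ)) = (r2, r2, (0:ℂ)) := by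
  conv_rhs => rw [← sig_involutive θ₀ 2 (r2, r2, (0:ℂ)), s3A]
lemma s3D : sig θ₀ 2 ((0:ℂ), r2, (2:ℂ)) = ((0:ℂ), r2, (1:ℂ)) := by
  conv_rhs => rw [← sig_involutive θ₀ 2 ((0:ℂ), r2, (1:ℂ)), s3C]
lemma s3F : sig θ₀ 2 (r2, (0:ℂ), (2:ℂ)) = (r2, (0:ℂ), (1:ℂ)) := by
  conv_rhs => rw [← sig_involutive θ₀ 2 (r2, (0:ℂ), (1:ℂ)), s3E]

lemma memO {x : ℂ × ℂ × ℂ} :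
    x ∈ O₀ ↔ x = (r2, r2, (0:ℂ)) ∨ x = (r2, r2, (1:ℂ)) ∨ x = ((0:ℂ), r2, (1:ℂ)) ∨
      x = ((0:ℂ), r2, (2:ℂ)) ∨ x = (r2, (0:ℂ), (1:ℂ)) ∨ x = (r2, (0:ℂ), (2:ℂ)) := by
  simp [O₀]

lemma mapsTo (i : Fin 3) : Set.MapsTo (sig θ₀ i) O₀ O₀ := by
  intro x hx
  rw [memO] at hx ⊢
  fin_cases i <;> rcases hx with rfl | rfl | rfl | rfl | rfl | rfl <;>
    simp [s1A, s1B, s1C, s1D, s1E, s1F, s2A, s2B, s2C, s2D, s2E, s2F,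
      s3A, s3B, s3C, s3D, s3E, s3F]

lemma bijOn (i : Fin 3) : Set.BijOn (sig θ₀ i) O₀ O₀ := by
  refine ⟨mapsTo i, (sig_involutive θ₀ i).injective.injOn, fun y hy => ?_⟩
  exact ⟨sig θ₀ i y, mapsTo i hy, sig_involutive θ₀ i y⟩

lemma subS : O₀ ⊆ pvS θ₀ := by
  intro x hx
  rw [memO] at hx
  have h2 := hr2
  rcases hx with rfl | rfl | rfl | rfl | rfl | rfl <;>
    · simp only [pvS, pvF, θ₀, Set.mem_setOf_eq]
      first
      | linear_combination -hr2
      | linear_combination (-2 : ℂ) * hr2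

lemma ncardO : O₀.ncard = 6 := by
  have h0 := hr0
  have h0' : (0:ℂ) ≠ r2 := Ne.symm hr0
  rw [O₀]
  rw [Set.ncard_insert_of_notMem (by norm_num [Prod.ext_iff, h0, h0']),
    Set.ncard_insert_of_notMem (by norm_num [Prod.ext_iff, h0, h0']),
    Set.ncard_insert_of_notMem (by norm_num [Prod.ext_iff, h0, h0']),
    Set.ncard_insert_of_notMem (by norm_num [Prod.ext_iff, h0, h0']),
    Set.ncard_insert_of_notMem (by norm_num [Prod.ext_iff, h0, h0']),
    Set.ncard_singleton]

lemma coe_sigPerm (i : Fin 3) : ⇑(sigPerm θ₀ i) = sig θ₀ i := rfl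

lemma image_Gfull : ∀ g ∈ Gfull θ₀, (⇑g) '' O₀ = O₀ := by
  intro g hg
  refine Subgroup.closure_induction ?_ ?_ ?_ ?_ hg
  · rintro x ⟨i, rfl⟩
    rw [coe_sigPerm]
    exact (bijOn i).image_eq
  · simp
  · rintro x y - - hx hy
    rw [Equiv.Perm.coe_mul, Set.image_comp, hy, hx]
  · rintro x - hx
    calc (⇑x⁻¹) '' O₀ = (⇑x.symm) '' (⇑x '' O₀) := by rw [hx]; rfl
      _ = O₀ := Equiv.symm_image_image x O₀

lemma image_G2 : ∀ g ∈ G2 θ₀, (⇑g) '' O₀ = O₀ := by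
  intro g hg
  refine Subgroup.closure_induction ?_ ?_ ?_ ?_ hg
  · rintro x ⟨i, j, rfl⟩
    rw [Equiv.Perm.coe_mul, Set.image_comp, coe_sigPerm, coe_sigPerm,
      (bijOn j).image_eq, (bijOn i).image_eq]
  · simp
  · rintro x y - - hx hy
    rw [Equiv.Perm.coe_mul, Set.image_comp, hy, hx]
  · rintro x - hx
    calc (⇑x⁻¹) '' O₀ = (⇑x.symm) '' (⇑x '' O₀) := by rw [hx]; rfl
      _ = O₀ := Equiv.symm_image_image x O₀

lemma baseMem : (r2, r2, (1:ℂ)) ∈ O₀ := by rw [memO]; tauto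

lemma orbit_full : O₀ = {y | ∃ g ∈ Gfull θ₀, g (r2, r2, (1 : ℂ)) = y} := by
  apply Set.Subset.antisymm
  · intro y hy
    rw [memO] at hy
    have m : ∀ i, sigPerm θ₀ i ∈ Gfull θ₀ := fun i => Subgroup.subset_closure ⟨i, rfl⟩
    rcases hy with rfl | rfl | rfl | rfl | rfl | rfl
    · exact ⟨sigPerm θ₀ 2, m 2, s3B⟩
    · exact ⟨1, one_mem _, rfl⟩
    · exact ⟨sigPerm θ₀ 0, m 0, s1B⟩
    · exact ⟨sigPerm θ₀ 2 * sigPerm θ₀ 0, mul_mem (m 2) (m 0), by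
        show sig θ₀ 2 (sig θ₀ 0 _) = _
        rw [s1B, s3C]⟩
    · exact ⟨sigPerm θ₀ 1, m 1, s2B⟩
    · exact ⟨sigPerm θ₀ 2 * sigPerm θ₀ 1, mul_mem (m 2) (m 1), by
        show sig θ₀ 2 (sig θ₀ 1 _) = _
        rw [s2B, s3E]⟩
  · rintro y ⟨g, hg, rfl⟩
    rw [← image_Gfull g hg]
    exact ⟨_, baseMem, rfl⟩

lemma orbit_G2 : O₀ = {y | ∃ g ∈ G2 θ₀, g (r2, r2, (1 : ℂ)) = y} := by
  apply Set.Subset.antisymm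
  · intro y hy
    rw [memO] at hy
    have m : ∀ i j, sigPerm θ₀ i * sigPerm θ₀ j ∈ G2 θ₀ :=
      fun i j => Subgroup.subset_closure ⟨i, j, rfl⟩
    rcases hy with rfl | rfl | rfl | rfl | rfl | rfl
    · exact ⟨_, m 0 2, by show sig θ₀ 0 (sig θ₀ 2 _) = _; rw [s3B, s1A]⟩
    · exact ⟨_, m 0 0, by show sig θ₀ 0 (sig θ₀ 0 _) = _; rw [s1B, s1C]⟩
    · exact ⟨_, m 1 0, by show sig θ₀ 1 (sig θ₀ 0 _) = _; rw [s1B, s2C]⟩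
    · exact ⟨_, m 2 0, by show sig θ₀ 2 (sig θ₀ 0 _) = _; rw [s1B, s3C]⟩
    · exact ⟨_, m 0 1, by show sig θ₀ 0 (sig θ₀ 1 _) = _; rw [s2B, s1E]⟩
    · exact ⟨_, m 2 1, by show sig θ₀ 2 (sig θ₀ 1 _) = _; rw [s2B, s3E]⟩
  · rintro y ⟨g, hg, rfl⟩
    rw [← image_G2 g hg]
    exact ⟨_, baseMem, rfl⟩

end A1A1aux

/-- A finite orbit of degree 6 on the stratum of type `A₁⊕²`: for
`θ = (2√2, 2√2, 3, 4)`, the explicit 6-point set `O` lies on `S(θ)`, is mapped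
bijectively onto itself by each `σᵢ`, has exactly 6 elements, and is both the
`G`-orbit and the `G(2)`-orbit of `(√2, √2, 1)`. -/
theorem degree_six_orbit_A1A1 :
    (letI r2 : ℂ := (Real.sqrt 2 : ℝ)
     letI θ : ℂ × ℂ × ℂ × ℂ := (2 * r2, 2 * r2, (3 : ℂ), (4 : ℂ))
     letI O : Set (ℂ × ℂ × ℂ) :=
       {(r2, r2, (0 : ℂ)), (r2, r2, (1 : ℂ)), ((0 : ℂ), r2, (1 : ℂ)),
        ((0 : ℂ), r2, (2 : ℂ)), (r2, (0 : ℂ), (1 : ℂ)), (r2, (0 : ℂ), (2 : ℂ))}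
     O ⊆ pvS θ ∧
     (∀ i : Fin 3, Set.BijOn (sig θ i) O O) ∧
     O.ncard = 6 ∧
     O = {y | ∃ g ∈ Gfull θ, g (r2, r2, (1 : ℂ)) = y} ∧
     O = {y | ∃ g ∈ G2 θ, g (r2, r2, (1 : ℂ)) = y}) := by
  exact ⟨A1A1aux.subS, A1A1aux.bijOn, A1A1aux.ncardO, A1A1aux.orbit_full, A1A1aux.orbit_G2⟩
end
end

section
/- (Orbifold torus structure of the Cayley cubic.) Define Φ : (ℂ \ {0}) × (ℂ \ {0}) → ℂ³ by Φ(u,v) = (u + u⁻¹, v + v⁻¹, −(uv + (uv)⁻¹)). Then: (i) Φ(u,v) ∈ S(0,0,0,−4) for all u,v ∈ ℂ \ {0}; (ii) Φ is surjective onto S(0,0,0,−4); (iii) for u,v,u′,v′ ∈ ℂ \ {0}, Φ(u,v) = Φ(u′,v′) if and only if (u′,v′) = (u,v) or (u′,v′) = (u⁻¹,v⁻¹). Consequently, Φ induces a bijection between the quotient of (ℂ \ {0})² by the involution (u,v) ↦ (u⁻¹,v⁻¹) and the Cayley cubic S(0,0,0,−4). -/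
/-!
Writing `x₁ = u + u⁻¹`, `x₂ = v + v⁻¹` (always possible over `ℂ`), the Cayley cubic becomes
a quadratic in `x₃` that factors as
`(x₃ + uv + (uv)⁻¹) (x₃ + uv⁻¹ + (uv⁻¹)⁻¹)`,
so every point is `Φ(u, v)` or `Φ(u, v⁻¹)`. For the fibres, `u + u⁻¹` determines `u` up to
inversion, and the mixed choice `(u, v⁻¹)` satisfies the third coordinate only when
`(u - u⁻¹)(v - v⁻¹) = 0`, i.e. when it coincides with `(u, v)` or `(u⁻¹, v⁻¹)`.
-/

noncomputable section

/-- The orbifold-torus parametrization of the Cayley cubic: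
`Φ(u,v) = (u + u⁻¹, v + v⁻¹, −(uv + (uv)⁻¹))`. -/
def Phi (u v : ℂ) : ℂ × ℂ × ℂ :=
  (u + u⁻¹, v + v⁻¹, -(u * v + (u * v)⁻¹))

section Field

variable {K : Type*} [Field K]

theorem add_inv_eq_add_inv_iff {u u' : K} (hu : u ≠ 0) (hu' : u' ≠ 0) :
    u' + u'⁻¹ = u + u⁻¹ ↔ u' = u ∨ u' = u⁻¹ := by
  have key : (u' - u) * (u' - u⁻¹) = u' * ((u' + u'⁻¹) - (u + u⁻¹)) := by
    field_simp
    ring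
  constructor
  · intro h
    rw [h, sub_self, mul_zero, mul_eq_zero, sub_eq_zero, sub_eq_zero] at key
    exact key
  · rintro (rfl | rfl)
    · rfl
    · rw [inv_inv, add_comm]

open Polynomial in
theorem exists_ne_zero_add_inv_eq [IsAlgClosed K] (a : K) : ∃ u : K, u ≠ 0 ∧ u + u⁻¹ = a := by
  have hdeg : (X ^ 2 - C a * X + 1 : K[X]).degree = 2 := by compute_degree!
  obtain ⟨u, hu⟩ := IsAlgClosed.exists_root (X ^ 2 - C a * X + 1 : K[X]) (by simp [hdeg])
  simp only [IsRoot, eval_add, eval_sub, eval_pow, eval_mul, eval_X, eval_C, eval_one] at hu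
  have hu0 : u ≠ 0 := by
    rintro rfl
    simp at hu
  refine ⟨u, hu0, ?_⟩
  field_simp
  linear_combination hu

theorem eq_inv_or_eq_inv_of_mul_inv_add {u v : K}
    (h : u * v⁻¹ + u⁻¹ * v = u * v + u⁻¹ * v⁻¹) : u = u⁻¹ ∨ v = v⁻¹ := by
  have hprod : (u - u⁻¹) * (v - v⁻¹) = 0 := by linear_combination -h
  rcases mul_eq_zero.mp hprod with h | h
  · exact .inl (sub_eq_zero.mp h)
  · exact .inr (sub_eq_zero.mp h)

end Field

theorem pvF_cayley_add_inv {u v : ℂ} (hu : u ≠ 0) (hv : v ≠ 0) (c : ℂ) :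
    pvF (0, 0, 0, -4) (u + u⁻¹, v + v⁻¹, c) =
      (c + (u * v + (u * v)⁻¹)) * (c + (u * v⁻¹ + (u * v⁻¹)⁻¹)) := by
  simp only [pvF]
  field_simp
  ring

theorem Phi_inv_inv (u v : ℂ) : Phi u⁻¹ v⁻¹ = Phi u v := by
  simp only [Phi, inv_inv, mul_inv, Prod.mk.injEq]
  refine ⟨add_comm _ _, add_comm _ _, ?_⟩
  ring

theorem Phi_mem_cayley {u v : ℂ} (hu : u ≠ 0) (hv : v ≠ 0) :
    Phi u v ∈ pvS (0, 0, 0, -4) := by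
  change pvF _ (u + u⁻¹, v + v⁻¹, _) = 0
  rw [pvF_cayley_add_inv hu hv, neg_add_cancel, zero_mul]

theorem exists_Phi_eq_of_mem_cayley {x : ℂ × ℂ × ℂ} (hx : x ∈ pvS (0, 0, 0, -4)) :
    ∃ u v : ℂ, u ≠ 0 ∧ v ≠ 0 ∧ Phi u v = x := by
  obtain ⟨a, b, c⟩ := x
  obtain ⟨u, hu, rfl⟩ := exists_ne_zero_add_inv_eq a
  obtain ⟨v, hv, rfl⟩ := exists_ne_zero_add_inv_eq b
  change pvF _ _ = 0 at hx
  rcases mul_eq_zero.mp ((pvF_cayley_add_inv hu hv c).symm.trans hx) with h | h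
  · refine ⟨u, v, hu, hv, ?_⟩
    simp only [Phi, Prod.mk.injEq, true_and]
    linear_combination -h
  · refine ⟨u, v⁻¹, hu, inv_ne_zero hv, ?_⟩
    simp only [Phi, inv_inv, Prod.mk.injEq, true_and]
    exact ⟨add_comm _ _, by linear_combination -h⟩

theorem Phi_eq_Phi_iff {u v u' v' : ℂ} (hu : u ≠ 0) (hv : v ≠ 0) (hu' : u' ≠ 0) (hv' : v' ≠ 0) :
    Phi u v = Phi u' v' ↔ (u' = u ∧ v' = v) ∨ (u' = u⁻¹ ∧ v' = v⁻¹) := by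
  constructor
  · intro h
    simp only [Phi, Prod.mk.injEq] at h
    obtain ⟨h₁, h₂, h₃⟩ := h
    rcases (add_inv_eq_add_inv_iff hu hu').mp h₁.symm with hu₁ | hu₁ <;>
      rcases (add_inv_eq_add_inv_iff hv hv').mp h₂.symm with hv₁ | hv₁ <;>
      subst u' v' <;> simp only [mul_inv, inv_inv] at h₃
    · exact .inl ⟨rfl, rfl⟩
    · rcases eq_inv_or_eq_inv_of_mul_inv_add (u := u) (v := v) (by linear_combination h₃)
        with h | h
      · exact .inr ⟨h, rfl⟩
      · exact .inl ⟨rfl, h.symm⟩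
    · rcases eq_inv_or_eq_inv_of_mul_inv_add (u := u) (v := v) (by linear_combination h₃)
        with h | h
      · exact .inl ⟨h.symm, rfl⟩
      · exact .inr ⟨rfl, h⟩
    · exact .inr ⟨rfl, rfl⟩
  · rintro (⟨rfl, rfl⟩ | ⟨rfl, rfl⟩)
    · rfl
    · exact (Phi_inv_inv u v).symm

/-- Orbifold torus structure of the Cayley cubic: `Φ` maps `(ℂ∖{0})²` into the
Cayley cubic `S(0,0,0,−4)`, is surjective onto it, and identifies exactly the pairs
`(u,v)` and `(u⁻¹,v⁻¹)`; hence it induces a bijection from the quotient of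
`(ℂ∖{0})²` by the involution `(u,v) ↦ (u⁻¹,v⁻¹)` onto the Cayley cubic. -/
theorem cayley_orbifold_torus :
    (∀ u v : ℂ, u ≠ 0 → v ≠ 0 →
        Phi u v ∈ pvS ((0 : ℂ), (0 : ℂ), (0 : ℂ), (-4 : ℂ))) ∧
    (∀ x ∈ pvS ((0 : ℂ), (0 : ℂ), (0 : ℂ), (-4 : ℂ)),
        ∃ u v : ℂ, u ≠ 0 ∧ v ≠ 0 ∧ Phi u v = x) ∧
    (∀ u v u' v' : ℂ, u ≠ 0 → v ≠ 0 → u' ≠ 0 → v' ≠ 0 →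
        (Phi u v = Phi u' v' ↔ (u' = u ∧ v' = v) ∨ (u' = u⁻¹ ∧ v' = v⁻¹))) :=
  ⟨fun _ _ hu hv => Phi_mem_cayley hu hv,
    fun _ hx => exists_Phi_eq_of_mem_cayley hx,
    fun _ _ _ _ hu hv hu' hv' => Phi_eq_Phi_iff hu hv hu' hv'⟩
end
end
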